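/- There exists a universal constant $C>0$ with the following property. Let $\bar f:[0,1]\to[0,\infty)$ be continuously differentiable and concave with $\bar f(1)=0$, let $f:[0,1]\to\mathbb R$ be continuous with $|f|\le\bar f$ on $[0,1]$, let $n\ge 1$ be an integer, and define $f_n(r) = -r^{-4n}\int_0^r s^{8n-1}\big(\int_s^1 \tau^{1-4n} f(\tau)\,d\tau\big)ds$ for $r\in(0,1)$. Then for all $r\in(0,1)$: $|f_n(r)| \le \frac{C\,r^2}{n^2}\,M(r)$, where $M(r)=\sup_{\tau\in[0,r]}\bar f(\tau)+\sup_{\tau\in[0,r]}\tau\bar f'(\tau)$. -/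

import Mathlib

open MeasureTheory Set intervalIntegral

/-!
Write `A` and `B` for the two suprema in `M(r)`. Since `f̄ ≤ A` on `[0, r]` and `r f̄'(r) ≤ B`,
the tangent line of the concave function `f̄` at `r` gives `|f(τ)| ≤ f̄(τ) ≤ A + (B/r) τ` on
`[0, 1]`. Integrating this majorant against `τ^(1-4n)` bounds the inner integral by
`(A + B) s^(2-4n) / (4n - 3)` for `s ≤ r`, and the outer integral then yields
`|f_n(r)| ≤ (A + B) r² / ((4n - 3)(4n + 2))`, which is at most `(A + B) r² / n²`; so `C = 1` works.
-/

lemma ConcaveOn.le_add_deriv_mul_sub {S : Set ℝ} {g : ℝ → ℝ} {x y : ℝ} (hg : ConcaveOn ℝ S g)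
    (hx : x ∈ S) (hy : y ∈ S) (hgx : DifferentiableAt ℝ g x) :
    g y ≤ g x + deriv g x * (y - x) := by
  rcases lt_trichotomy x y with hxy | rfl | hyx
  · have h := hg.slope_le_deriv hx hy hxy hgx
    rw [slope_def_field, div_le_iff₀ (sub_pos.2 hxy)] at h
    linarith
  · simp
  · have h := hg.deriv_le_slope hy hx hyx hgx
    rw [slope_def_field, le_div_iff₀ (sub_pos.2 hyx)] at h
    linarith

lemma ConcaveOn.le_add_div_mul {S : Set ℝ} {g : ℝ → ℝ} {A B r τ : ℝ} (hg : ConcaveOn ℝ S g)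
    (hr : r ∈ S) (hr0 : 0 < r) (hgr : DifferentiableAt ℝ g r) (hA : ∀ t ∈ Icc 0 r, g t ≤ A)
    (hB : r * deriv g r ≤ B) (hB0 : 0 ≤ B) (hτ : τ ∈ S) (hτ0 : 0 ≤ τ) :
    g τ ≤ A + B / r * τ := by
  have hBr : 0 ≤ B / r * τ := by positivity
  rcases le_or_gt τ r with hτr | hrτ
  · linarith [hA τ ⟨hτ0, hτr⟩]
  · have hderiv : deriv g r ≤ B / r := by rwa [le_div_iff₀ hr0, mul_comm]
    calc g τ ≤ g r + deriv g r * (τ - r) := hg.le_add_deriv_mul_sub hr hτ hgr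
      _ ≤ A + B / r * (τ - r) :=
          add_le_add (hA r ⟨hr0.le, le_rfl⟩) (mul_le_mul_of_nonneg_right hderiv (by linarith))
      _ ≤ A + B / r * τ := by gcongr; linarith

lemma integral_zpow_le_of_lt_neg_one {k : ℤ} (hk : k < -1) {s b : ℝ} (hs : 0 < s) (hsb : s ≤ b) :
    ∫ τ in s..b, τ ^ k ≤ s ^ (k + 1) / (-k - 1) := by
  have h0 : (0 : ℝ) ∉ uIcc s b := by
    rw [uIcc_of_le hsb]; exact fun h => hs.not_ge h.1
  have hk' : (k : ℝ) + 1 < 0 := by exact_mod_cast (show k + 1 < 0 by omega)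
  rw [integral_zpow (Or.inr ⟨by omega, h0⟩), ← neg_div_neg_eq, neg_sub, neg_add']
  have : 0 < b ^ (k + 1) := zpow_pos (hs.trans_le hsb) _
  exact div_le_div_of_nonneg_right (by linarith) (by linarith)

lemma abs_integral_zpow_mul_le {f : ℝ → ℝ} {k : ℤ} (hk : k < -2) {A B L s b : ℝ}
    (hA : 0 ≤ A) (hL : 0 ≤ L) (hLs : L * s ≤ B) (hs : 0 < s) (hsb : s ≤ b)
    (hf : ContinuousOn f (Icc s b)) (hfle : ∀ τ ∈ Icc s b, |f τ| ≤ A + L * τ) :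
    |∫ τ in s..b, τ ^ k * f τ| ≤ (A + B) / (-k - 2) * s ^ (k + 1) := by
  have hpos : ∀ τ ∈ Icc s b, 0 < τ := fun τ hτ => hs.trans_le hτ.1
  have hzpow (m : ℤ) : IntervalIntegrable (fun τ : ℝ => τ ^ m) volume s b :=
    (continuousOn_id.zpow₀ m fun τ hτ => Or.inl (hpos τ hτ).ne').intervalIntegrable_of_Icc hsb
  have hk2 : (k : ℝ) + 2 < 0 := by exact_mod_cast (show k + 2 < 0 by omega)
  calc |∫ τ in s..b, τ ^ k * f τ|
      ≤ ∫ τ in s..b, |τ ^ k * f τ| := abs_integral_le_integral_abs hsb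
    _ ≤ ∫ τ in s..b, (A * τ ^ k + L * τ ^ (k + 1)) := by
        refine integral_mono_on hsb ?_ (((hzpow k).const_mul A).add ((hzpow _).const_mul L))
          fun τ hτ => ?_
        · exact ((continuousOn_id.zpow₀ k fun τ hτ => Or.inl (hpos τ hτ).ne').mul hf).abs
            |>.intervalIntegrable_of_Icc hsb
        · have hτk : 0 < τ ^ k := zpow_pos (hpos τ hτ) k
          rw [abs_mul, abs_of_pos hτk, zpow_add_one₀ (hpos τ hτ).ne']
          nlinarith [hfle τ hτ]
    _ = A * (∫ τ in s..b, τ ^ k) + L * ∫ τ in s..b, τ ^ (k + 1) := by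
        rw [integral_add ((hzpow k).const_mul A) ((hzpow _).const_mul L)]
        simp only [intervalIntegral.integral_const_mul]
    _ ≤ A * (s ^ (k + 1) / (-k - 1)) + L * (s ^ (k + 1 + 1) / (-↑(k + 1) - 1)) :=
        add_le_add
          (mul_le_mul_of_nonneg_left
            (integral_zpow_le_of_lt_neg_one (k := k) (by omega) hs hsb) hA)
          (mul_le_mul_of_nonneg_left
            (integral_zpow_le_of_lt_neg_one (k := k + 1) (by omega) hs hsb) hL)
    _ = A * s ^ (k + 1) / (-k - 1) + L * s * s ^ (k + 1) / (-k - 2) := by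
        rw [zpow_add_one₀ hs.ne' (k + 1)]
        push_cast
        ring
    _ ≤ A * s ^ (k + 1) / (-k - 2) + B * s ^ (k + 1) / (-k - 2) := by
        gcongr <;> linarith
    _ = (A + B) / (-k - 2) * s ^ (k + 1) := by ring

lemma abs_integral_le_mul_pow {F : ℝ → ℝ} {c r : ℝ} (m : ℕ) (hr : 0 ≤ r)
    (hF : ∀ s ∈ Ioc 0 r, |F s| ≤ c * s ^ m) :
    |∫ s in 0..r, F s| ≤ c * (r ^ (m + 1) / (m + 1)) := by
  calc |∫ s in 0..r, F s| ≤ ∫ s in 0..r, c * s ^ m :=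
        norm_integral_le_of_norm_le (f := F) hr (ae_of_all volume hF)
          (Continuous.intervalIntegrable (by fun_prop) _ _)
    _ = c * (r ^ (m + 1) / (m + 1)) := by simp [integral_pow]

noncomputable def buildingBlock (f : ℝ → ℝ) (n : ℕ) (r : ℝ) : ℝ :=
  -(r ^ (-(4 * (n:ℤ)))) *
    ∫ s in (0:ℝ)..r, s ^ (8 * (n:ℤ) - 1) * ∫ τ in s..(1:ℝ), τ ^ (1 - 4 * (n:ℤ)) * f τ

lemma abs_buildingBlock_le {f : ℝ → ℝ} {A B r : ℝ} {n : ℕ} (hn : 1 ≤ n)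
    (hf : ContinuousOn f (Ioc 0 1)) (hA : 0 ≤ A) (hB : 0 ≤ B) (hr : r ∈ Ioc 0 1)
    (hfle : ∀ τ ∈ Ioc 0 1, |f τ| ≤ A + B / r * τ) :
    |buildingBlock f n r| ≤ r ^ 2 / (n:ℝ) ^ 2 * (A + B) := by
  obtain ⟨hr0, hr1⟩ := hr
  have hn' : (1 : ℝ) ≤ n := by exact_mod_cast hn
  have hinner : ∀ s ∈ Ioc 0 r,
      |s ^ (8 * (n:ℤ) - 1) * ∫ τ in s..(1:ℝ), τ ^ (1 - 4 * (n:ℤ)) * f τ|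
        ≤ (A + B) / (4 * n - 3) * s ^ (4 * n + 1) := by
    rintro s ⟨hs0, hsr⟩
    have hIcc : Icc s 1 ⊆ Ioc 0 1 := fun τ hτ => ⟨hs0.trans_le hτ.1, hτ.2⟩
    have hI := abs_integral_zpow_mul_le (k := 1 - 4 * n) (by omega) hA (div_nonneg hB hr0.le)
      (by rw [div_mul_eq_mul_div, div_le_iff₀ hr0]; gcongr) hs0 (hsr.trans hr1) (hf.mono hIcc)
      fun τ hτ => hfle τ (hIcc hτ)
    rw [abs_mul, abs_of_pos (zpow_pos hs0 _)]
    calc s ^ (8 * (n:ℤ) - 1) * |∫ τ in s..(1:ℝ), τ ^ (1 - 4 * (n:ℤ)) * f τ|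
        ≤ s ^ (8 * (n:ℤ) - 1) *
            ((A + B) / (-↑(1 - 4 * (n:ℤ)) - 2) * s ^ (1 - 4 * (n:ℤ) + 1)) := by
          gcongr
      _ = (A + B) / (4 * n - 3) * s ^ (4 * n + 1) := by
          rw [mul_left_comm, ← zpow_add₀ hs0.ne', ← zpow_natCast]
          push_cast
          ring_nf
  have houter := abs_integral_le_mul_pow (4 * n + 1) hr0.le hinner
  rw [buildingBlock, abs_mul, abs_neg, abs_of_pos (zpow_pos hr0 _)]
  calc r ^ (-(4 * (n:ℤ))) * |∫ s in (0:ℝ)..r,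
        s ^ (8 * (n:ℤ) - 1) * ∫ τ in s..(1:ℝ), τ ^ (1 - 4 * (n:ℤ)) * f τ|
      ≤ r ^ (-(4 * (n:ℤ))) *
          ((A + B) / (4 * n - 3) * (r ^ (4 * n + 1 + 1) / (↑(4 * n + 1) + 1))) := by
        gcongr
    _ = r ^ 2 / ((4 * n - 3) * (4 * n + 2)) * (A + B) := by
        have hr4 : r ^ (-(4 * (n:ℤ))) = (r ^ (4 * n))⁻¹ := by
          rw [zpow_neg, ← zpow_natCast]
          push_cast
          rfl
        rw [hr4, pow_add r (4 * n + 1) 1, pow_add r (4 * n) 1]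
        push_cast
        field_simp
        ring
    _ ≤ r ^ 2 / (n:ℝ) ^ 2 * (A + B) := by
        gcongr
        nlinarith

theorem stmt7 :
    ∃ C > (0:ℝ), ∀ (fbar : ℝ → ℝ),
      (∀ r ∈ Set.Icc (0:ℝ) 1, 0 ≤ fbar r) →
      (∀ x ∈ Set.Icc (0:ℝ) 1, DifferentiableAt ℝ fbar x) →
      ContinuousOn (deriv fbar) (Set.Icc 0 1) →
      ConcaveOn ℝ (Set.Icc 0 1) fbar →
      fbar 1 = 0 →
      ∀ (f : ℝ → ℝ), ContinuousOn f (Set.Icc 0 1) →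
      (∀ r ∈ Set.Icc (0:ℝ) 1, |f r| ≤ fbar r) →
      ∀ (n : ℕ), 1 ≤ n →
      ∀ (fn : ℝ → ℝ),
      (∀ r ∈ Set.Ioo (0:ℝ) 1,
        fn r = -(r ^ (-(4 * (n:ℤ)))) *
          ∫ s in (0:ℝ)..r, s ^ (8 * (n:ℤ) - 1) * ∫ τ in s..(1:ℝ), τ ^ (1 - 4 * (n:ℤ)) * f τ) →
      ∀ r ∈ Set.Ioo (0:ℝ) 1,
        |fn r| ≤ C * r ^ 2 / (n:ℝ) ^ 2 *
            (sSup (fbar '' Set.Icc 0 r) +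
              sSup ((fun τ => τ * deriv fbar τ) '' Set.Icc 0 r)) := by
  refine ⟨1, one_pos, ?_⟩
  intro fbar hfbar0 hdiff hderiv hconc _ f hf hfle n hn fn hfn r hr
  have hsub : Icc 0 r ⊆ Icc 0 1 := Icc_subset_Icc_right hr.2.le
  have hfbar : ContinuousOn fbar (Icc 0 1) := fun x hx =>
    (hdiff x hx).continuousAt.continuousWithinAt
  have hA : ∀ τ ∈ Icc 0 r, fbar τ ≤ sSup (fbar '' Icc 0 r) := fun τ hτ =>
    (hfbar.mono hsub).le_sSup_image_Icc hτ
  have hB : ∀ τ ∈ Icc 0 r, τ * deriv fbar τ ≤ sSup ((fun τ => τ * deriv fbar τ) '' Icc 0 r) :=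
    fun τ hτ => (continuousOn_id.mul (hderiv.mono hsub)).le_sSup_image_Icc hτ
  have h0r : (0:ℝ) ∈ Icc 0 r := left_mem_Icc.2 hr.1.le
  have hB0 : 0 ≤ sSup ((fun τ => τ * deriv fbar τ) '' Icc 0 r) := by simpa using hB 0 h0r
  rw [hfn r hr, one_mul]
  refine abs_buildingBlock_le hn (hf.mono Ioc_subset_Icc_self)
    ((hfbar0 0 (hsub h0r)).trans (hA 0 h0r)) hB0 ⟨hr.1, hr.2.le⟩ fun τ hτ => ?_
  have hτ : τ ∈ Icc 0 1 := Ioc_subset_Icc_self hτ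
  exact (hfle τ hτ).trans <| hconc.le_add_div_mul (Ioo_subset_Icc_self hr) hr.1
    (hdiff r (Ioo_subset_Icc_self hr)) hA (hB r ⟨hr.1.le, le_rfl⟩) hB0 hτ hτ.1
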